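/- Let φ be a polynomial in z₁₁,z₁₂,z₂₁,z₂₂ that is homogeneous of degree 2l (for a nonnegative half-integer l, so 2l ∈ ℤ≥0) and harmonic, i.e., □φ = 0 where □ = 4(∂₁₁∂₂₂ − ∂₁₂∂₂₁). Then for every integer k ≥ 0, □(N^k · φ) = 4k(2l + k + 1) N^{k−1} · φ, where N = z₁₁z₂₂ − z₁₂z₂₁. The same identity holds for all integers k (negative included) on the open set where N ≠ 0. -/

import Mathlib

noncomputable section

/-- The space of 2×2 complex matrices, as functions of indices. -/
abbrev M2 : Type := Fin 2 → Fin 2 → ℂ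

/-- The elementary matrix with a 1 in position (i,j). -/
def eM (i j : Fin 2) : M2 := fun a b => if a = i ∧ b = j then (1 : ℂ) else 0

/-- The partial derivative ∂/∂z_{ij}. -/
noncomputable def pd (i j : Fin 2) (f : M2 → ℂ) : M2 → ℂ :=
  fun Z => fderiv ℂ f Z (eM i j)

/-- The determinant N(Z) = z₁₁z₂₂ − z₁₂z₂₁. -/
def detM (Z : M2) : ℂ := Z 0 0 * Z 1 1 - Z 0 1 * Z 1 0

/-- The operator □ = 4(∂₁₁∂₂₂ − ∂₁₂∂₂₁). -/
noncomputable def box (f : M2 → ℂ) : M2 → ℂ :=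
  fun Z => 4 * (pd 0 0 (pd 1 1 f) Z - pd 0 1 (pd 1 0 f) Z)

namespace Stmt6Aux

open MvPolynomial

abbrev ι : Type := Fin 2 × Fin 2

/-- Evaluation of a polynomial as a function on M2. -/
def ev (Q : MvPolynomial ι ℂ) : M2 → ℂ := fun Z => MvPolynomial.eval (fun p => Z p.1 p.2) Q

/-- The determinant polynomial. -/
def D : MvPolynomial ι ℂ := X (0,0) * X (1,1) - X (0,1) * X (1,0)

lemma detM_eq : detM = ev D := by
  funext Z; simp [detM, ev, D]

/-- coordinate continuous linear map -/
def co (p : ι) : M2 →L[ℂ] ℂ :=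
  (ContinuousLinearMap.proj (R := ℂ) (φ := fun _ : Fin 2 => ℂ) p.2).comp
    (ContinuousLinearMap.proj (R := ℂ) (φ := fun _ : Fin 2 => Fin 2 → ℂ) p.1)

lemma co_apply (p : ι) (Z : M2) : co p Z = Z p.1 p.2 := rfl

lemma co_eM (p : ι) (i j : Fin 2) :
    co p (eM i j) = if p = (i, j) then 1 else 0 := by
  simp [co, eM, Prod.ext_iff]

/-- Differentiability of polynomial functions, together with the formula for
partial derivatives. -/
lemma ev_diff_pd (Q : MvPolynomial ι ℂ) :
    Differentiable ℂ (ev Q) ∧ ∀ i j : Fin 2, pd i j (ev Q) = ev (pderiv (i, j) Q) := by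
  induction Q using MvPolynomial.induction_on with
  | C a =>
      constructor
      · have : ev (C a) = fun _ => a := by funext Z; simp [ev]
        rw [this]; exact differentiable_const a
      · intro i j
        funext Z
        have : ev (C a) = fun _ => a := by funext Z; simp [ev]
        simp [pd, this, pderiv_C, ev]
  | add p q ihp ihq =>
      have hpq : ev (p + q) = fun Z => ev p Z + ev q Z := by funext Z; simp [ev]
      constructor
      · rw [hpq]; exact ihp.1.add ihq.1
      · intro i j
        funext Z
        rw [hpq]
        simp only [pd]
        rw [fderiv_fun_add (ihp.1 Z) (ihq.1 Z)]
        have := congrFun (ihp.2 i j) Z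
        have := congrFun (ihq.2 i j) Z
        simp only [pd] at *
        simp [ev, *]
  | mul_X p n ih =>
      have hpx : ev (p * X n) = fun Z => ev p Z * co n Z := by
        funext Z; simp [ev, co_apply]
      constructor
      · rw [hpx]; exact ih.1.mul (co n).differentiable
      · intro i j
        funext Z
        rw [hpx]
        simp only [pd]
        rw [fderiv_fun_mul (ih.1 Z) ((co n).differentiable Z)]
        have h1 : fderiv ℂ (fun Z => co n Z) Z = co n := (co n).fderiv
        have h2 := congrFun (ih.2 i j) Z
        simp only [pd] at h2
        simp only [ContinuousLinearMap.add_apply, ContinuousLinearMap.smul_apply, h1, h2,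
          smul_eq_mul, co_eM]
        have : pderiv (i, j) (p * X n) = pderiv (i,j) p * X n + p * pderiv (i,j) (X n) :=
          pderiv_mul
        rw [this]
        by_cases hn : n = (i, j)
        · subst hn; simp [ev, co_apply]; ring
        · simp [ev, co_apply, hn, pderiv_X_of_ne hn, mul_comm]

lemma ev_differentiable (Q : MvPolynomial ι ℂ) : Differentiable ℂ (ev Q) := (ev_diff_pd Q).1

lemma pd_ev (Q : MvPolynomial ι ℂ) (i j : Fin 2) :
    pd i j (ev Q) = ev (pderiv (i, j) Q) := (ev_diff_pd Q).2 i j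

/-- Euler's identity for homogeneous polynomials. -/
lemma euler {e : ℕ} {Q : MvPolynomial ι ℂ} (h : Q.IsHomogeneous e) :
    ∑ p : ι, X p * pderiv p Q = C (e : ℂ) * Q := by
  have key : ∀ s ∈ Q.support, ∑ p : ι, X p * pderiv p (monomial s (coeff s Q))
      = C (e : ℂ) * monomial s (coeff s Q) := by
    intro s hs
    have hdeg : ∑ p : ι, s p = e := by
      have h1 := h (mem_support_iff.mp hs)
      rw [← h1]
      simp [Finsupp.weight, Finsupp.linearCombination, Finsupp.sum]
      rw [Finset.sum_subset (Finset.subset_univ s.support)]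
      intro x _ hx
      simpa using Finsupp.notMem_support_iff.mp hx
    have step : ∀ p : ι, X p * pderiv p (monomial s (coeff s Q))
        = monomial s (coeff s Q * (s p : ℂ)) := by
      intro p
      rw [pderiv_monomial, X, monomial_mul, one_mul]
      by_cases hp : s p = 0
      · simp [hp]
      · congr 1
        rw [add_tsub_cancel_of_le]
        rwa [Finsupp.single_le_iff, Nat.one_le_iff_ne_zero]
    simp only [step]
    rw [← map_sum, C_mul_monomial]
    congr 1
    rw [← Finset.mul_sum, ← Nat.cast_sum, hdeg]
    ring
  have h0 : ∀ p : ι, X p * pderiv p Q = ∑ s ∈ Q.support, X p * pderiv p (monomial s (coeff s Q)) := by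
    intro p
    conv_lhs => rw [Q.as_sum]
    rw [map_sum, Finset.mul_sum]
  simp only [h0]
  rw [Finset.sum_comm]
  conv_rhs => rw [Q.as_sum, Finset.mul_sum]
  exact Finset.sum_congr rfl key

/-- The "box" operator at the polynomial level. -/
def BB (Q : MvPolynomial ι ℂ) : MvPolynomial ι ℂ :=
  pderiv ((0,0) : ι) (pderiv ((1,1) : ι) Q) - pderiv ((0,1) : ι) (pderiv ((1,0) : ι) Q)

lemma box_ev (Q : MvPolynomial ι ℂ) (Z : M2) : box (ev Q) Z = 4 * ev (BB Q) Z := by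
  simp only [box, pd_ev, BB]
  simp [ev]

lemma pd00D : pderiv ((0,0) : ι) D = X (1,1) := by
  simp [D, pderiv_mul, pderiv_X, Pi.single_apply, Prod.ext_iff]

lemma pd11D : pderiv ((1,1) : ι) D = X (0,0) := by
  simp [D, pderiv_mul, pderiv_X, Pi.single_apply, Prod.ext_iff]

lemma pd01D : pderiv ((0,1) : ι) D = -X (1,0) := by
  simp [D, pderiv_mul, pderiv_X, Pi.single_apply, Prod.ext_iff]

lemma pd10D : pderiv ((1,0) : ι) D = -X (0,1) := by
  simp [D, pderiv_mul, pderiv_X, Pi.single_apply, Prod.ext_iff]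

lemma euler_expand {e : ℕ} {Q : MvPolynomial ι ℂ} (h : Q.IsHomogeneous e) :
    X ((0,0) : ι) * pderiv ((0,0) : ι) Q + X ((0,1) : ι) * pderiv ((0,1) : ι) Q
      + X ((1,0) : ι) * pderiv ((1,0) : ι) Q + X ((1,1) : ι) * pderiv ((1,1) : ι) Q
      = C (e : ℂ) * Q := by
  have := euler h
  rw [Fintype.sum_prod_type, Fin.sum_univ_two] at this
  simp only [Fin.sum_univ_two] at this
  linear_combination this

lemma stepB {e : ℕ} {Q : MvPolynomial ι ℂ} (h : Q.IsHomogeneous e) :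
    BB (D * Q) = (C (e : ℂ) + 2) * Q + D * BB Q := by
  have hE := euler_expand h
  simp only [BB, pderiv_mul, map_add, map_sub, map_neg, pd00D, pd01D, pd10D, pd11D,
    pderiv_X_self, pderiv_X_of_ne (show ((1,1) : ι) ≠ (0,0) by decide),
    pderiv_X_of_ne (show ((0,0) : ι) ≠ (1,1) by decide),
    pderiv_X_of_ne (show ((1,0) : ι) ≠ (0,1) by decide),
    pderiv_X_of_ne (show ((0,1) : ι) ≠ (1,0) by decide)]
  linear_combination hE

lemma hD_homog : D.IsHomogeneous 2 :=
  ((isHomogeneous_X ℂ ((0,0) : ι)).mul (isHomogeneous_X ℂ ((1,1) : ι))).sub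
    ((isHomogeneous_X ℂ ((0,1) : ι)).mul (isHomogeneous_X ℂ ((1,0) : ι)))

lemma natKey {d : ℕ} {P : MvPolynomial ι ℂ} (hhom : P.IsHomogeneous d) (hB : BB P = 0) :
    ∀ k : ℕ, BB (D ^ k * P) = C ((k : ℂ) * ((d : ℂ) + (k : ℂ) + 1)) * (D ^ (k - 1) * P) := by
  intro k
  induction k with
  | zero => simpa using hB
  | succ k ih =>
      have hQ : (D ^ k * P).IsHomogeneous (2 * k + d) := (hD_homog.pow k).mul hhom
      have h1 : D ^ (k + 1) * P = D * (D ^ k * P) := by ring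
      rw [h1, stepB hQ, ih]
      have h2 : D * (C ((k : ℂ) * ((d : ℂ) + (k : ℂ) + 1)) * (D ^ (k - 1) * P))
          = C ((k : ℂ) * ((d : ℂ) + (k : ℂ) + 1)) * (D ^ k * P) := by
        cases k with
        | zero => simp
        | succ m =>
            have : (m + 1) - 1 = m := rfl
            rw [this]; ring
      rw [h2]
      have h3 : (k + 1) - 1 = k := rfl
      rw [h3]
      have h4 : ((C (((2 * k + d : ℕ) : ℂ)) + 2) + C ((k : ℂ) * ((d : ℂ) + (k : ℂ) + 1))
            : MvPolynomial ι ℂ)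
          = C ((((k + 1 : ℕ)) : ℂ) * ((d : ℂ) + (((k + 1 : ℕ)) : ℂ) + 1)) := by
        rw [show (2 : MvPolynomial ι ℂ) = C 2 from (map_ofNat C 2).symm, ← map_add, ← map_add]
        congr 1
        push_cast
        ring
      linear_combination (D ^ k * P) * h4

/-- First-step polynomial for direction (i,j), coefficient c. -/
def Q1 (c : ℂ) (P : MvPolynomial ι ℂ) (i j : Fin 2) : MvPolynomial ι ℂ :=
  C c * pderiv ((i, j) : ι) D * P + D * pderiv ((i, j) : ι) P

/-- The key polynomial identity for the zpow case. -/
lemma polyKey (c : ℂ) {d : ℕ} {P : MvPolynomial ι ℂ} (hhom : P.IsHomogeneous d)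
    (hB : BB P = 0) :
    (C (c - 1) * pderiv ((0,0) : ι) D * Q1 c P 1 1 + D * pderiv ((0,0) : ι) (Q1 c P 1 1))
      - (C (c - 1) * pderiv ((0,1) : ι) D * Q1 c P 1 0 + D * pderiv ((0,1) : ι) (Q1 c P 1 0))
      = C (c * ((d : ℂ) + c + 1)) * (D * P) := by
  have hE := euler_expand hhom
  have hB' : pderiv ((0,0) : ι) (pderiv ((1,1) : ι) P)
      = pderiv ((0,1) : ι) (pderiv ((1,0) : ι) P) := by
    exact sub_eq_zero.mp (by simpa [BB] using hB)
  simp only [Q1, pd00D, pd11D, pd01D, pd10D, map_add, pderiv_mul, pderiv_C, pderiv_X_self,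
    pderiv_X_of_ne (show ((0,0) : ι) ≠ (1,1) by decide),
    pderiv_X_of_ne (show ((1,0) : ι) ≠ (0,1) by decide), map_neg, hB']
  rw [show C (c - 1) = C c - C 1 from map_sub C c 1, map_one,
    show C (c * ((d : ℂ) + c + 1)) = C c * (C (d : ℂ) + C c + C 1) by
      rw [← map_add, ← map_add, ← map_mul], map_one]
  simp only [D]
  linear_combination (C c * (X ((0,0) : ι) * X ((1,1) : ι) - X ((0,1) : ι) * X ((1,0) : ι))) * hE

lemma pd_detM (i j : Fin 2) (Z : M2) :
    fderiv ℂ detM Z (eM i j) = ev (pderiv ((i, j) : ι) D) Z := by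
  have := congrFun (pd_ev D i j) Z
  simp only [pd] at this
  rw [detM_eq]
  exact this

lemma pd_zpow_mul (m : ℤ) (Q : MvPolynomial ι ℂ) (i j : Fin 2) (Z : M2)
    (hZ : detM Z ≠ 0) :
    pd i j (fun Y => detM Y ^ m * ev Q Y) Z
      = detM Z ^ (m - 1) * ev (C (m : ℂ) * pderiv ((i, j) : ι) D * Q
          + D * pderiv ((i, j) : ι) Q) Z := by
  have hdet : DifferentiableAt ℂ detM Z := by
    rw [detM_eq]; exact (ev_differentiable D) Z
  have h1 : HasFDerivAt (fun Y => detM Y ^ m)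
      (((m : ℂ) * detM Z ^ (m - 1)) • fderiv ℂ detM Z) Z :=
    (hasDerivAt_zpow m (detM Z) (Or.inl hZ)).comp_hasFDerivAt Z hdet.hasFDerivAt
  have h2 : HasFDerivAt (ev Q) (fderiv ℂ (ev Q) Z) Z := ((ev_differentiable Q) Z).hasFDerivAt
  have h4 : fderiv ℂ (fun Y => detM Y ^ m * ev Q Y) Z = _ := (h1.mul h2).fderiv
  have e2 : fderiv ℂ (ev Q) Z (eM i j) = ev (pderiv ((i, j) : ι) Q) Z := by
    have := congrFun (pd_ev Q i j) Z; simpa [pd] using this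
  simp only [pd, h4, ContinuousLinearMap.add_apply, ContinuousLinearMap.smul_apply,
    smul_eq_mul, pd_detM, e2]
  have hev : ev (C (m : ℂ) * pderiv ((i, j) : ι) D * Q + D * pderiv ((i, j) : ι) Q) Z
      = (m : ℂ) * ev (pderiv ((i, j) : ι) D) Z * ev Q Z + detM Z * ev (pderiv ((i, j) : ι) Q) Z := by
    rw [detM_eq]; simp [ev]
  rw [hev, zpow_sub_one₀ hZ]
  field_simp
  ring

end Stmt6Aux

open Stmt6Aux MvPolynomial Topology in
/-- if φ is a harmonic polynomial homogeneous of degree 2l = d, then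
□(N^k·φ) = 4k(2l+k+1) N^{k−1}·φ for all integers k ≥ 0 (everywhere), and for all
integers k on the set N ≠ 0. -/
theorem stmt6 (d : ℕ) (P : MvPolynomial (Fin 2 × Fin 2) ℂ) (hhom : P.IsHomogeneous d)
    (φ : M2 → ℂ) (hφ : ∀ Z : M2, φ Z = MvPolynomial.eval (fun p => Z p.1 p.2) P)
    (hharm : ∀ Z : M2, box φ Z = 0) :
    (∀ k : ℕ, ∀ Z : M2,
        box (fun Y => detM Y ^ k * φ Y) Z =
          4 * (k : ℂ) * ((d : ℂ) + (k : ℂ) + 1) * detM Z ^ (k - 1) * φ Z) ∧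
    (∀ k : ℤ, ∀ Z : M2, detM Z ≠ 0 →
        box (fun Y => detM Y ^ k * φ Y) Z =
          4 * (k : ℂ) * ((d : ℂ) + (k : ℂ) + 1) * detM Z ^ (k - 1) * φ Z) := by
  have hφ' : φ = ev P := funext hφ
  subst hφ'
  have hB : BB P = 0 := by
    apply MvPolynomial.funext
    intro x
    have h1 := hharm (fun i j => x (i, j))
    rw [box_ev] at h1
    have h2 : ev (BB P) (fun i j => x (i, j)) = 0 :=
      (mul_eq_zero.mp h1).resolve_left (by norm_num)
    have h3 : (fun p : ι => x (p.1, p.2)) = x := funext fun p => by simp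
    simpa [ev, h3] using h2
  constructor
  · intro k Z
    have hfun : (fun Y => detM Y ^ k * ev P Y) = ev (D ^ k * P) := by
      funext Y
      rw [detM_eq]
      simp [ev]
    rw [hfun, box_ev, natKey hhom hB k, detM_eq]
    simp [ev]
    ring
  · intro k Z hZ
    have hcont : Continuous detM := by
      rw [detM_eq]; exact (ev_differentiable D).continuous
    have hev : ∀ᶠ Y in 𝓝 Z, detM Y ≠ 0 :=
      hcont.continuousAt.eventually_ne hZ
    set Qa := Q1 (k : ℂ) P 1 1 with hQa
    set Qb := Q1 (k : ℂ) P 1 0 with hQb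
    set R1 := C ((k : ℂ) - 1) * pderiv ((0,0) : ι) D * Qa + D * pderiv ((0,0) : ι) Qa with hR1
    set R2 := C ((k : ℂ) - 1) * pderiv ((0,1) : ι) D * Qb + D * pderiv ((0,1) : ι) Qb with hR2
    have hcast : ((k - 1 : ℤ) : ℂ) = (k : ℂ) - 1 := by push_cast; ring
    have h11 : pd 1 1 (fun Y => detM Y ^ k * ev P Y)
        =ᶠ[𝓝 Z] fun Y => detM Y ^ (k - 1) * ev Qa Y :=
      hev.mono fun Y hY => pd_zpow_mul k P 1 1 Y hY
    have h10 : pd 1 0 (fun Y => detM Y ^ k * ev P Y)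
        =ᶠ[𝓝 Z] fun Y => detM Y ^ (k - 1) * ev Qb Y :=
      hev.mono fun Y hY => pd_zpow_mul k P 1 0 Y hY
    have g11 : pd 0 0 (pd 1 1 (fun Y => detM Y ^ k * ev P Y)) Z
        = detM Z ^ (k - 1 - 1) * ev R1 Z := by
      have hfd := Filter.EventuallyEq.fderiv_eq (𝕜 := ℂ) h11
      simp only [pd]
      rw [hfd]
      have h := pd_zpow_mul (k - 1) Qa 0 0 Z hZ
      rw [hcast] at h
      simp only [pd] at h
      exact h
    have g10 : pd 0 1 (pd 1 0 (fun Y => detM Y ^ k * ev P Y)) Z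
        = detM Z ^ (k - 1 - 1) * ev R2 Z := by
      have hfd := Filter.EventuallyEq.fderiv_eq (𝕜 := ℂ) h10
      simp only [pd]
      rw [hfd]
      have h := pd_zpow_mul (k - 1) Qb 0 1 Z hZ
      rw [hcast] at h
      simp only [pd] at h
      exact h
    have hpoly := polyKey (k : ℂ) hhom hB
    have hRR : ev R1 Z - ev R2 Z
        = (k : ℂ) * ((d : ℂ) + (k : ℂ) + 1) * (detM Z * ev P Z) := by
      have h5 := congrArg (fun R => ev R Z) hpoly
      have h6 : ev (R1 - R2) Z = ev (C ((k : ℂ) * ((d : ℂ) + (k : ℂ) + 1)) * (D * P)) Z := h5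
      rw [detM_eq]
      simpa [ev] using h6
    have hbox : box (fun Y => detM Y ^ k * ev P Y) Z
        = 4 * (detM Z ^ (k - 1 - 1) * (ev R1 Z - ev R2 Z)) := by
      simp only [box]
      rw [g11, g10]
      ring
    rw [hbox, hRR, zpow_sub_one₀ hZ (k - 1), zpow_sub_one₀ hZ k]
    field_simp
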